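/- arXiv:2402.03904 — 4 statements merged into one kernel-verified Lean document; each statement's English description precedes it below -/
import Mathlib

section
/- Let Φ_M be a real n_M×k matrix with a left inverse Φ_M† (a k×n_M matrix with Φ_M† Φ_M = I_k), let Φ_N be a real n_N×k matrix with left inverse Φ_N†, let Π be a real n_M×n_N matrix, and let Λ_M, Λ_N be real diagonal k×k matrices. Set C = Φ_M† Π Φ_N. Assume the map is isometric in the encoded sense that Φ_M† Π = C Φ_N† and C Λ_N = Λ_M C. Then for every function h : ℝ → ℝ the spectral filter operator preservation identity holds: C h(Λ_N) Φ_N† = h(Λ_M) Φ_M† Π. -/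
/-- Spectral Filter Operator Preservation (Remark 4.1, discrete version). -/
theorem spectral_filter_operator_preservation
    {nM nN k : ℕ}
    (ΦM : Matrix (Fin nM) (Fin k) ℝ) (ΦMd : Matrix (Fin k) (Fin nM) ℝ)
    (hM : ΦMd * ΦM = 1)
    (ΦN : Matrix (Fin nN) (Fin k) ℝ) (ΦNd : Matrix (Fin k) (Fin nN) ℝ)
    (hN : ΦNd * ΦN = 1)
    (Pi : Matrix (Fin nM) (Fin nN) ℝ)
    (ΛM ΛN : Fin k → ℝ)
    (C : Matrix (Fin k) (Fin k) ℝ)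
    (hCdef : C = ΦMd * Pi * ΦN)
    (hIso1 : ΦMd * Pi = C * ΦNd)
    (hIso2 : C * Matrix.diagonal ΛN = Matrix.diagonal ΛM * C)
    (h : ℝ → ℝ) :
    C * Matrix.diagonal (fun i => h (ΛN i)) * ΦNd =
      Matrix.diagonal (fun i => h (ΛM i)) * ΦMd * Pi := by
  have key : C * Matrix.diagonal (fun i => h (ΛN i)) =
      Matrix.diagonal (fun i => h (ΛM i)) * C := by
    ext i j
    have h2 : C i j * ΛN j = ΛM i * C i j := by
      have := congrFun (congrFun hIso2 i) j
      simpa [Matrix.mul_diagonal, Matrix.diagonal_mul] using this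
    simp only [Matrix.mul_diagonal, Matrix.diagonal_mul]
    by_cases hc : C i j = 0
    · simp [hc]
    · have : ΛN j = ΛM i := by
        rw [mul_comm (ΛM i)] at h2
        exact mul_left_cancel₀ hc h2
      rw [this]; ring
  rw [key, Matrix.mul_assoc, Matrix.mul_assoc, ← hIso1]
end

section
/- Let C and C^Π be real k×k matrices, Λ_M, Λ_N = diag(λ^N_1,…,λ^N_k) real diagonal k×k matrices, and h_1,…,h_S : ℝ → ℝ filter functions satisfying the consistency condition ∑_{s=1}^S h_s(λ^N_j)² ≠ 0 for every j = 1,…,k. If C h_s(Λ_N) = h_s(Λ_M) C^Π for every s = 1,…,S, then C is uniquely determined as C = (∑_{s=1}^S h_s(Λ_M) C^Π h_s(Λ_N)) · G(Λ_N)^{-1}, where G(Λ_N) = ∑_{s=1}^S h_s(Λ_N)² (which is invertible). -/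
/-- Remark 4.2: under the consistency condition, the functional map satisfying all
spectral filter operator preservations is uniquely determined by the closed formula
`C = (∑_s h_s(ΛM) CΠ h_s(ΛN)) · G(ΛN)⁻¹` with `G(ΛN) = ∑_s h_s(ΛN)²` invertible. -/
theorem refinement_formula {k S : ℕ} (C CPi : Matrix (Fin k) (Fin k) ℝ)
    (ΛM ΛN : Fin k → ℝ) (h : Fin S → ℝ → ℝ)
    (hcons : ∀ j : Fin k, ∑ s : Fin S, (h s (ΛN j)) ^ 2 ≠ 0)
    (hpres : ∀ s : Fin S, C * Matrix.diagonal (fun j => h s (ΛN j)) =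
      Matrix.diagonal (fun j => h s (ΛM j)) * CPi) :
    IsUnit (∑ s : Fin S,
        Matrix.diagonal (fun j => h s (ΛN j)) * Matrix.diagonal (fun j => h s (ΛN j))) ∧
    C = (∑ s : Fin S,
        Matrix.diagonal (fun j => h s (ΛM j)) * CPi * Matrix.diagonal (fun j => h s (ΛN j))) *
      (∑ s : Fin S,
        Matrix.diagonal (fun j => h s (ΛN j)) * Matrix.diagonal (fun j => h s (ΛN j)))⁻¹ := by
  have hG : (∑ s : Fin S,
      Matrix.diagonal (fun j => h s (ΛN j)) * Matrix.diagonal (fun j => h s (ΛN j)))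
      = Matrix.diagonal (fun j => ∑ s : Fin S, (h s (ΛN j)) ^ 2) := by
    simp only [Matrix.diagonal_mul_diagonal]
    ext i j
    by_cases hij : i = j <;> simp [Matrix.sum_apply, Matrix.diagonal_apply, hij, sq]
  have hunit : IsUnit (∑ s : Fin S,
      Matrix.diagonal (fun j => h s (ΛN j)) * Matrix.diagonal (fun j => h s (ΛN j))) := by
    rw [hG, Matrix.isUnit_iff_isUnit_det, Matrix.det_diagonal]
    exact isUnit_iff_ne_zero.2 (Finset.prod_ne_zero_iff.2 fun j _ => hcons j)
  refine ⟨hunit, ?_⟩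
  have key : (∑ s : Fin S,
      Matrix.diagonal (fun j => h s (ΛM j)) * CPi * Matrix.diagonal (fun j => h s (ΛN j)))
      = C * ∑ s : Fin S,
        Matrix.diagonal (fun j => h s (ΛN j)) * Matrix.diagonal (fun j => h s (ΛN j)) := by
    rw [Finset.mul_sum]
    refine Finset.sum_congr rfl fun s _ => ?_
    rw [← hpres s, mul_assoc]
  rw [key, mul_assoc, Matrix.mul_nonsing_inv _ ((Matrix.isUnit_iff_isUnit_det _).mp hunit), mul_one]
end

section
/- Let C^Π be a real k×k matrix, Λ_M = diag(λ^M_1,…,λ^M_k) and Λ_N = diag(λ^N_1,…,λ^N_k) real diagonal k×k matrices, and h_1,…,h_S : ℝ → ℝ filter functions satisfying ∑_{s=1}^S h_s(λ^N_j)² ≠ 0 for every j. Define C* = (∑_{s=1}^S h_s(Λ_M) C^Π h_s(Λ_N)) · G(Λ_N)^{-1} with G(Λ_N) = ∑_{s=1}^S h_s(Λ_N)². Then C* is the unique minimizer over all real k×k matrices C of the objective F(C) = ∑_{s=1}^S ‖C h_s(Λ_N) − h_s(Λ_M) C^Π‖_F²; that is, F(C*) ≤ F(C) for all C, with equality only when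 C = C*. -/
/-- The squared Frobenius norm of a real matrix: the sum of its squared entries. -/
noncomputable def frobSq {m n : Type*} [Fintype m] [Fintype n] (A : Matrix m n ℝ) : ℝ :=
  ∑ i, ∑ j, (A i j) ^ 2

lemma key_scalar {S : ℕ} (hs ms : Fin S → ℝ) (ha : (∑ s, (hs s) ^ 2) ≠ 0) (x : ℝ) :
    ∑ s, (x * hs s - ms s) ^ 2 =
      (∑ s, ((∑ s, ms s * hs s) / (∑ s, (hs s) ^ 2) * hs s - ms s) ^ 2) +
        (∑ s, (hs s) ^ 2) * (x - (∑ s, ms s * hs s) / (∑ s, (hs s) ^ 2)) ^ 2 := by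
  set a := ∑ s, (hs s) ^ 2 with haa
  set b := ∑ s, ms s * hs s with hbb
  have expand : ∀ y : ℝ, ∑ s, (y * hs s - ms s) ^ 2
      = y ^ 2 * a - 2 * y * b + ∑ s, (ms s) ^ 2 := by
    intro y
    rw [haa, hbb, Finset.mul_sum, Finset.mul_sum, ← Finset.sum_sub_distrib,
      ← Finset.sum_add_distrib]
    exact Finset.sum_congr rfl fun s _ => by ring
  rw [expand, expand]
  field_simp
  ring

/-- Least-squares formulation of Remark 4.2: `C*` is the unique minimizer of the
multi-filter objective `F(C) = ∑_s ‖C h_s(ΛN) − h_s(ΛM) CΠ‖_F²`. -/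
theorem least_squares_minimizer {k S : ℕ} (CPi : Matrix (Fin k) (Fin k) ℝ)
    (ΛM ΛN : Fin k → ℝ) (h : Fin S → ℝ → ℝ)
    (hcons : ∀ j : Fin k, ∑ s : Fin S, (h s (ΛN j)) ^ 2 ≠ 0) :
    let G := ∑ s : Fin S,
      Matrix.diagonal (fun j => h s (ΛN j)) * Matrix.diagonal (fun j => h s (ΛN j))
    let Cstar := (∑ s : Fin S,
      Matrix.diagonal (fun j => h s (ΛM j)) * CPi * Matrix.diagonal (fun j => h s (ΛN j))) * G⁻¹
    let F := fun C : Matrix (Fin k) (Fin k) ℝ =>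
      ∑ s : Fin S, frobSq (C * Matrix.diagonal (fun j => h s (ΛN j)) -
        Matrix.diagonal (fun j => h s (ΛM j)) * CPi)
    ∀ C : Matrix (Fin k) (Fin k) ℝ, F Cstar ≤ F C ∧ (F Cstar = F C → C = Cstar) := by
  intro G Cstar F C
  set a : Fin k → ℝ := fun j => ∑ s, (h s (ΛN j)) ^ 2 with haa
  -- G is the diagonal matrix with entries a
  have hG : G = Matrix.diagonal a := by
    show (∑ s : Fin S, _) = _
    ext i j
    simp [Matrix.sum_apply, Matrix.diagonal_mul_diagonal, Matrix.diagonal_apply, haa, sq]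
  have hGinv : G⁻¹ = Matrix.diagonal (fun j => (a j)⁻¹) := by
    apply Matrix.inv_eq_right_inv
    rw [hG, Matrix.diagonal_mul_diagonal]
    rw [show (fun j => a j * (a j)⁻¹) = fun _ => (1:ℝ) from funext fun j =>
      mul_inv_cancel₀ (hcons j)]
    exact Matrix.diagonal_one
  -- Cstar entrywise
  have hCstar : ∀ i j, Cstar i j =
      (∑ s, (h s (ΛM i) * CPi i j) * h s (ΛN j)) / a j := by
    intro i j
    show ((∑ s : Fin S,
      Matrix.diagonal (fun j => h s (ΛM j)) * CPi * Matrix.diagonal (fun j => h s (ΛN j))) *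
        G⁻¹) i j = _
    rw [hGinv, Matrix.mul_diagonal, Matrix.sum_apply]
    simp only [Matrix.mul_diagonal, Matrix.diagonal_mul]
    rw [div_eq_mul_inv]
  -- F entrywise
  have hF : ∀ D : Matrix (Fin k) (Fin k) ℝ, F D =
      ∑ i, ∑ j, ∑ s, (D i j * h s (ΛN j) - h s (ΛM i) * CPi i j) ^ 2 := by
    intro D
    show (∑ s : Fin S, frobSq _) = _
    simp only [frobSq, Matrix.sub_apply, Matrix.mul_diagonal, Matrix.diagonal_mul]
    rw [Finset.sum_comm]
    exact Finset.sum_congr rfl fun i _ => Finset.sum_comm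
  -- key decomposition
  have hdecomp : F C = F Cstar + ∑ i, ∑ j, a j * (C i j - Cstar i j) ^ 2 := by
    rw [hF, hF, ← Finset.sum_add_distrib]
    refine Finset.sum_congr rfl fun i _ => ?_
    rw [← Finset.sum_add_distrib]
    refine Finset.sum_congr rfl fun j _ => ?_
    have hk := key_scalar (fun s => h s (ΛN j)) (fun s => h s (ΛM i) * CPi i j)
      (hcons j) (C i j)
    have hc : Cstar i j = (∑ s, (h s (ΛM i) * CPi i j) * h s (ΛN j)) / a j := hCstar i j
    rw [hk]
    congr 1
    · refine Finset.sum_congr rfl fun s _ => ?_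
      rw [hc]
    · rw [hc]
  have hnonneg : 0 ≤ ∑ i, ∑ j, a j * (C i j - Cstar i j) ^ 2 := by
    refine Finset.sum_nonneg fun i _ => Finset.sum_nonneg fun j _ => ?_
    have : 0 ≤ a j := Finset.sum_nonneg fun s _ => sq_nonneg _
    positivity
  constructor
  · rw [hdecomp]; linarith
  · intro heq
    have hzero : ∑ i, ∑ j, a j * (C i j - Cstar i j) ^ 2 = 0 := by
      rw [hdecomp] at heq; linarith
    ext i j
    have h1 := (Finset.sum_eq_zero_iff_of_nonneg fun i _ =>
      Finset.sum_nonneg fun j _ => mul_nonneg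
        (Finset.sum_nonneg fun s _ => sq_nonneg _) (sq_nonneg _)).mp hzero i (Finset.mem_univ i)
    have h2 := (Finset.sum_eq_zero_iff_of_nonneg fun j _ => mul_nonneg
        (Finset.sum_nonneg fun s _ => sq_nonneg _) (sq_nonneg _)).mp h1 j (Finset.mem_univ j)
    have h3 : (C i j - Cstar i j) ^ 2 = 0 := by
      rcases mul_eq_zero.mp h2 with h4 | h4
      · exact absurd h4 (hcons j)
      · exact h4
    have := pow_eq_zero_iff (n := 2) (by norm_num) |>.mp h3
    linarith
end

section
/- Let C^Π be a real k×k matrix, Λ_M, Λ_N = diag(λ^N_1,…,λ^N_k) real diagonal k×k matrices with C^Π Λ_N = Λ_M C^Π, and let h_1,…,h_S : ℝ → ℝ be filter functions satisfying ∑_{s=1}^S h_s(λ^N_j)² ≠ 0 for every j. Then C^Π is a fixed point of the refinement formula: (∑_{s=1}^S h_s(Λ_M) C^Π h_s(Λ_N)) · (∑_{s=1}^S h_s(Λ_N)²)^{-1} = C^Π. -/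
/-- The functional map of an isometry (one commuting with the Laplacian eigenvalues)
is a fixed point of the inference-time refinement formula of Remark 4.2. -/
theorem refinement_fixed_point {k S : ℕ} (CPi : Matrix (Fin k) (Fin k) ℝ)
    (ΛM ΛN : Fin k → ℝ)
    (hcomm : CPi * Matrix.diagonal ΛN = Matrix.diagonal ΛM * CPi)
    (h : Fin S → ℝ → ℝ)
    (hcons : ∀ j : Fin k, ∑ s : Fin S, (h s (ΛN j)) ^ 2 ≠ 0) :
    (∑ s : Fin S,
        Matrix.diagonal (fun j => h s (ΛM j)) * CPi * Matrix.diagonal (fun j => h s (ΛN j))) *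
      (∑ s : Fin S,
        Matrix.diagonal (fun j => h s (ΛN j)) * Matrix.diagonal (fun j => h s (ΛN j)))⁻¹ = CPi := by
  have hentry : ∀ i j, CPi i j ≠ 0 → ΛM i = ΛN j := by
    intro i j hne
    have hc := congrFun (congrFun hcomm i) j
    simp [Matrix.mul_diagonal, Matrix.diagonal_mul] at hc
    have h2 : ΛM i * CPi i j = ΛN j * CPi i j := by
      rw [mul_comm (ΛN j)]; linarith
    exact mul_right_cancel₀ hne h2
  have hD : (∑ s : Fin S,
      Matrix.diagonal (fun j => h s (ΛN j)) * Matrix.diagonal (fun j => h s (ΛN j)))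
      = Matrix.diagonal (fun j => ∑ s : Fin S, (h s (ΛN j)) ^ 2) := by
    ext i j
    simp only [Matrix.sum_apply, Matrix.diagonal_mul_diagonal, Matrix.diagonal_apply, pow_two]
    split <;> simp
  have hL : (∑ s : Fin S,
      Matrix.diagonal (fun j => h s (ΛM j)) * CPi * Matrix.diagonal (fun j => h s (ΛN j)))
      = CPi * Matrix.diagonal (fun j => ∑ s : Fin S, (h s (ΛN j)) ^ 2) := by
    ext i j
    simp only [Matrix.sum_apply, Matrix.diagonal_mul, Matrix.mul_diagonal, Finset.mul_sum]
    by_cases hne : CPi i j = 0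
    · simp [hne]
    · rw [hentry i j hne]
      exact Finset.sum_congr rfl fun x _ => by ring
  rw [hD, hL, Matrix.mul_assoc,
    Matrix.mul_nonsing_inv _ (by
      rw [Matrix.det_diagonal]
      exact isUnit_iff_ne_zero.mpr (Finset.prod_ne_zero_iff.mpr fun j _ => hcons j)),
    Matrix.mul_one]
end
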